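/- Let Γ be a group generated by a finite symmetric set S = S⁻¹ ⊆ Γ whose growth function satisfies γ_S(n−1) ≥ C·n^d for every integer n ≥ 1, where C > 0 and d ≥ 1 are real constants. Then for every finite nonempty subset D ⊆ Γ, |∂_S D| / |D| ≥ ( C^{1/d}·d / (d+1)^{1+1/d} ) · |D|^{−1/d}. -/

import Mathlib

/-!
Translating `D` by an element `g` of the ball of radius `r` moves at most `r · |∂D|` points
of `D` out of `D`, since a single generator moves only boundary points out. On the other hand
`∑_g |D ∩ g D| ≤ |D|²`, as each pair `(x, y) ∈ D × D` is counted only for `g = x y⁻¹`. So a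
ball with at least `(d + 1)|D|` elements forces `d |D| ≤ (d + 1) r |∂D|`, and the growth bound
provides such a ball with `r ≤ ((d + 1)|D| / C)^{1/d}`.
-/

open scoped Pointwise

variable {G : Type*} [Group G] [DecidableEq G]

/-- The ball of radius `r` in the word metric: elements of `G` expressible as
a product of at most `r` elements of `S`. -/
def wordBall (S : Finset G) : ℕ → Finset G
  | 0 => {1}
  | r + 1 => wordBall S r ∪ S * wordBall S r

/-- The inner boundary of a finite set `D` with respect to the generating set `S`. -/
def innerBoundary (S D : Finset G) : Finset G :=
  D.filter fun x => ∃ s ∈ S, s * x ∉ D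

open Finset

lemma card_sdiff_smul_le_card_innerBoundary {S : Finset G} (D : Finset G) {s : G}
    (hs : s⁻¹ ∈ S) : #(D \ s • D) ≤ #(innerBoundary S D) := by
  refine card_le_card fun x hx => ?_
  rw [mem_sdiff, ← inv_smul_mem_iff, smul_eq_mul] at hx
  exact mem_filter.2 ⟨hx.1, s⁻¹, hs, hx.2⟩

lemma card_sdiff_mul_smul_le (D : Finset G) (g h : G) :
    #(D \ (g * h) • D) ≤ #(D \ g • D) + #(D \ h • D) := by
  have hsub : D \ (g * h) • D ⊆ (D \ g • D) ∪ g • (D \ h • D) := by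
    rw [smul_finset_sdiff, smul_smul]
    intro x hx
    by_cases hxg : x ∈ g • D <;> simp_all
  calc #(D \ (g * h) • D) ≤ #((D \ g • D) ∪ g • (D \ h • D)) := card_le_card hsub
    _ ≤ #(D \ g • D) + #(g • (D \ h • D)) := card_union_le _ _
    _ = #(D \ g • D) + #(D \ h • D) := by rw [card_smul_finset]

lemma card_sdiff_smul_le_of_mem_wordBall {S : Finset G} (hsymm : ∀ s ∈ S, s⁻¹ ∈ S)
    (D : Finset G) {r : ℕ} {g : G} (hg : g ∈ wordBall S r) :
    #(D \ g • D) ≤ r * #(innerBoundary S D) := by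
  induction r generalizing g with
  | zero => simp_all [wordBall]
  | succ r ih =>
    rw [wordBall, mem_union] at hg
    rcases hg with hg | hg
    · exact (ih hg).trans (Nat.mul_le_mul_right _ r.le_succ)
    · obtain ⟨s, hs, h, hh, rfl⟩ := mem_mul.1 hg
      calc #(D \ (s * h) • D) ≤ #(D \ s • D) + #(D \ h • D) := card_sdiff_mul_smul_le D s h
        _ ≤ #(innerBoundary S D) + r * #(innerBoundary S D) :=
          add_le_add (card_sdiff_smul_le_card_innerBoundary D (hsymm s hs)) (ih hh)
        _ = (r + 1) * #(innerBoundary S D) := by ring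

lemma sum_card_inter_smul_le (B D : Finset G) : ∑ g ∈ B, #(D ∩ g • D) ≤ #D ^ 2 := by
  simp_rw [card_inter_smul, ← card_mul_eq]
  rw [sum_card_fiberwise_eq_card_filter]
  calc _ ≤ #(D ×ˢ D⁻¹) := card_filter_le _ _
    _ = #D ^ 2 := by rw [card_product, card_inv, sq]

lemma card_wordBall_mul_card_le {S : Finset G} (hsymm : ∀ s ∈ S, s⁻¹ ∈ S) (D : Finset G)
    (r : ℕ) :
    #(wordBall S r) * #D ≤ #D ^ 2 + #(wordBall S r) * (r * #(innerBoundary S D)) := by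
  have hmoved : ∀ g ∈ wordBall S r, #D ≤ #(D ∩ g • D) + r * #(innerBoundary S D) := by
    intro g hg
    have := card_inter_add_card_sdiff D (g • D)
    have := card_sdiff_smul_le_of_mem_wordBall hsymm D hg
    omega
  calc #(wordBall S r) * #D = ∑ _g ∈ wordBall S r, #D := by rw [sum_const, smul_eq_mul]
    _ ≤ ∑ g ∈ wordBall S r, (#(D ∩ g • D) + r * #(innerBoundary S D)) := sum_le_sum hmoved
    _ = ∑ g ∈ wordBall S r, #(D ∩ g • D) + #(wordBall S r) * (r * #(innerBoundary S D)) := by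
      rw [sum_add_distrib, sum_const, smul_eq_mul]
    _ ≤ #D ^ 2 + #(wordBall S r) * (r * #(innerBoundary S D)) :=
      Nat.add_le_add_right (sum_card_inter_smul_le _ _) _

lemma sub_one_mul_card_le_of_mul_card_le_card_wordBall {S : Finset G}
    (hsymm : ∀ s ∈ S, s⁻¹ ∈ S) {D : Finset G} (hD : D.Nonempty) {r : ℕ} {k : ℝ} (hk : 0 < k)
    (hball : k * #D ≤ #(wordBall S r)) :
    (k - 1) * #D ≤ k * (r * #(innerBoundary S D)) := by
  have hcount : (#(wordBall S r) : ℝ) * #D ≤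
      (#D : ℝ) ^ 2 + #(wordBall S r) * (r * #(innerBoundary S D)) := by
    exact_mod_cast card_wordBall_mul_card_le hsymm D r
  have hD0 : (0 : ℝ) < #D := by exact_mod_cast hD.card_pos
  have hB0 : (0 : ℝ) < #(wordBall S r) := by nlinarith
  refine le_of_mul_le_mul_left ?_ hB0
  nlinarith

lemma exists_radius_le_rpow_le_card_wordBall {S : Finset G} {C d : ℝ} (hC : 0 < C) (hd : 0 < d)
    (hgrowth : ∀ n : ℕ, 1 ≤ n → C * (n : ℝ) ^ d ≤ ((wordBall S (n - 1)).card : ℝ))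
    {x : ℝ} (hx : 0 ≤ x) :
    ∃ r : ℕ, (r : ℝ) ≤ (x / C) ^ (1 / d) ∧ x ≤ #(wordBall S r) := by
  set t := (x / C) ^ (1 / d)
  have ht : 0 ≤ t := by positivity
  refine ⟨⌊t⌋₊, Nat.floor_le ht, ?_⟩
  have htd : C * t ^ d = x := by
    rw [← Real.rpow_mul (by positivity), one_div_mul_cancel hd.ne', Real.rpow_one,
      mul_div_cancel₀ _ hC.ne']
  calc x = C * t ^ d := htd.symm
    _ ≤ C * ((⌊t⌋₊ + 1 : ℕ) : ℝ) ^ d := by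
      gcongr
      exact_mod_cast (Nat.lt_floor_add_one t).le
    _ ≤ #(wordBall S ⌊t⌋₊) := by simpa using hgrowth (⌊t⌋₊ + 1) (by omega)

lemma isoperimetric_constant_eq {C d m : ℝ} (hC : 0 < C) (hd : 0 < d) (hm : 0 < m) :
    C ^ (1 / d) * d / (d + 1) ^ (1 + 1 / d) * m ^ (-(1 / d)) =
      d / ((d + 1) * ((d + 1) * m / C) ^ (1 / d)) := by
  have hd1 : (0 : ℝ) < d + 1 := by linarith
  rw [Real.div_rpow (by positivity) hC.le, Real.mul_rpow hd1.le hm.le, Real.rpow_add hd1,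
    Real.rpow_one, Real.rpow_neg hm.le]
  have : 0 < C ^ (1 / d) := Real.rpow_pos_of_pos hC _
  have : 0 < (d + 1) ^ (1 / d) := Real.rpow_pos_of_pos hd1 _
  have : 0 < m ^ (1 / d) := Real.rpow_pos_of_pos hm _
  field_simp

theorem stmt8_general (S : Finset G)
    (hsymm : ∀ s ∈ S, s⁻¹ ∈ S)
    (C d : ℝ) (hC : 0 < C) (hd : 1 ≤ d)
    (hgrowth : ∀ n : ℕ, 1 ≤ n → C * (n : ℝ) ^ d ≤ ((wordBall S (n - 1)).card : ℝ))
    (D : Finset G) (hD : D.Nonempty) :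
    C ^ (1 / d) * d / (d + 1) ^ (1 + 1 / d) * (D.card : ℝ) ^ (-(1 / d)) ≤
      ((innerBoundary S D).card : ℝ) / (D.card : ℝ) := by
  have hd0 : 0 < d := by linarith
  have hD0 : (0 : ℝ) < #D := by exact_mod_cast hD.card_pos
  obtain ⟨r, hr, hball⟩ :=
    exists_radius_le_rpow_le_card_wordBall (x := (d + 1) * #D) hC hd0 hgrowth (by positivity)
  have hiso := sub_one_mul_card_le_of_mul_card_le_card_wordBall hsymm hD (by linarith) hball
  rw [isoperimetric_constant_eq hC hd0 hD0, div_le_div_iff₀ (by positivity) hD0]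
  calc d * #D = (d + 1 - 1) * #D := by ring
    _ ≤ (d + 1) * (r * #(innerBoundary S D)) := hiso
    _ ≤ (d + 1) * (((d + 1) * #D / C) ^ (1 / d) * #(innerBoundary S D)) := by gcongr
    _ = #(innerBoundary S D) * ((d + 1) * ((d + 1) * #D / C) ^ (1 / d)) := by ring

theorem stmt8 (S : Finset G)
    (hsymm : ∀ s ∈ S, s⁻¹ ∈ S) (hgen : Subgroup.closure (S : Set G) = ⊤)
    (C d : ℝ) (hC : 0 < C) (hd : 1 ≤ d)
    (hgrowth : ∀ n : ℕ, 1 ≤ n → C * (n : ℝ) ^ d ≤ ((wordBall S (n - 1)).card : ℝ))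
    (D : Finset G) (hD : D.Nonempty) :
    C ^ (1 / d) * d / (d + 1) ^ (1 + 1 / d) * (D.card : ℝ) ^ (-(1 / d)) ≤
      ((innerBoundary S D).card : ℝ) / (D.card : ℝ) :=
  stmt8_general S hsymm C d hC hd hgrowth D hD
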